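/- Let X ⊆ ℝ^{n} be a set satisfying: there is a constant k such that any two points of X are joined by a C¹ curve in X of speed at most k times their distance. Let g, h : X → ℝ be L-Lipschitz functions with g < h pointwise, and let C := {(x, r) : x ∈ X, g(x) < r < h(x)} ⊆ ℝ^{n+1}. Then there exists a constant K, depending only on k and L, such that any two points of C can be joined by a C¹ curve γ : [0,1] → C with |γ'(t)| ≤ K|x − y| for all t (where x, y are the endpoints). In particular, C satisfies the Whitney arc property: any two points x, y ∈ C are joined by a rectifiable curve in C of length at most K|x − y|. -/

import Mathlib

/-!
Join the bases `x`, `y` of `p = (x, r)` and `q = (y, s)` by a curve `γ` in `X`, and lift it to the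
cylinder by keeping the relative height `θ ∈ (0, 1)` between the graphs of `g` and `h`, with `θ`
running linearly from the relative height of `p` to that of `q`. Along `γ` the graphs move at speed
`≤ L k ‖x - y‖`, and the change of `θ`, multiplied by the gap `h - g`, is at most
`|r - s| + L ‖x - y‖`; so the lift has speed `≤ K ‖p - q‖` with `K = k + 3 L k + L + 1`.
-/

open MeasureTheory Set ENNReal
noncomputable section

abbrev E (n : ℕ) := EuclideanSpace ℝ (Fin n)

/-- There is a C¹ curve in `S` from `x` to `y` of speed at most `c * ‖x − y‖`. -/
def HasCurve {V : Type*} [NormedAddCommGroup V] [NormedSpace ℝ V]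
    (S : Set V) (c : ℝ) (x y : V) : Prop :=
  ∃ γ : ℝ → V, γ 0 = x ∧ γ 1 = y ∧ (∀ t ∈ Set.Icc (0:ℝ) 1, γ t ∈ S) ∧
    ContDiffOn ℝ 1 γ (Set.Icc 0 1) ∧
    ∀ t ∈ Set.Icc (0:ℝ) 1, ‖derivWithin γ (Set.Icc 0 1) t‖ ≤ c * ‖x - y‖

/-- The "cylinder" C = {(x,r) : x ∈ X, g x < r < h x}, inside the ℓ²-product ℝ^n ×₂ ℝ. -/
def Cyl {n : ℕ} (X : Set (E n)) (g h : E n → ℝ) : Set (WithLp 2 (E n × ℝ)) :=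
  {p | (WithLp.equiv 2 (E n × ℝ) p).1 ∈ X ∧
    g (WithLp.equiv 2 (E n × ℝ) p).1 < (WithLp.equiv 2 (E n × ℝ) p).2 ∧
    (WithLp.equiv 2 (E n × ℝ) p).2 < h (WithLp.equiv 2 (E n × ℝ) p).1}

open Filter Topology in
theorem HasDerivWithinAt.norm_le_of_norm_sub_le {𝕜 F : Type*} [NontriviallyNormedField 𝕜]
    [NormedAddCommGroup F] [NormedSpace 𝕜 F] {f : 𝕜 → F} {f' : F} {s : Set 𝕜} {t : 𝕜} {C : ℝ}
    (hf : HasDerivWithinAt f f' s t) (hs : UniqueDiffWithinAt 𝕜 s t)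
    (hC : ∀ u ∈ s, ‖f u - f t‖ ≤ C * ‖u - t‖) : ‖f'‖ ≤ C := by
  have : (𝓝[s \ {t}] t).NeBot := by
    simpa [AccPt, nhdsWithin, sdiff_eq, inter_comm, inf_assoc] using hs.accPt
  refine le_of_tendsto (hasDerivWithinAt_iff_tendsto_slope.1 hf).norm ?_
  filter_upwards [self_mem_nhdsWithin] with u ⟨hus, hut⟩
  have : 0 < ‖u - t‖ := norm_pos_iff.2 (sub_ne_zero.2 hut)
  rw [slope_def_module, norm_smul, norm_inv, inv_mul_le_iff₀ this, mul_comm]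
  exact hC u hus

theorem WithLp.prod_norm_le_add {α β : Type*} [SeminormedAddCommGroup α]
    [SeminormedAddCommGroup β] (p : ℝ≥0∞) [Fact (1 ≤ p)] (x : WithLp p (α × β)) :
    ‖x‖ ≤ ‖x.fst‖ + ‖x.snd‖ := by
  have : x = WithLp.toLp p (x.fst, 0) + WithLp.toLp p (0, x.snd) := by
    simp [WithLp.ext_iff, Prod.ext_iff]
  calc ‖x‖ ≤ ‖WithLp.toLp p (x.fst, (0 : β))‖ + ‖WithLp.toLp p ((0 : α), x.snd)‖ := by
        conv_lhs => rw [this]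
        exact norm_add_le _ _
    _ = _ := by rw [WithLp.norm_toLp_fst, WithLp.norm_toLp_snd]

theorem hasCurve_iff {V : Type*} [NormedAddCommGroup V] [NormedSpace ℝ V] {S : Set V} {c : ℝ}
    {x y : V} :
    HasCurve S c x y ↔ ∃ γ : ℝ → V, γ 0 = x ∧ γ 1 = y ∧ (∀ t ∈ Icc (0:ℝ) 1, γ t ∈ S) ∧
      ContDiffOn ℝ 1 γ (Icc 0 1) ∧
      ∀ a ∈ Icc (0:ℝ) 1, ∀ b ∈ Icc (0:ℝ) 1, ‖γ a - γ b‖ ≤ c * ‖x - y‖ * |a - b| := by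
  refine exists_congr fun γ => and_congr_right' <| and_congr_right' <| and_congr_right' <|
    and_congr_right fun hγ => ⟨fun hd a ha b hb => ?_, fun hlip t ht => ?_⟩
  · simpa [Real.norm_eq_abs] using
      (convex_Icc (0:ℝ) 1).norm_image_sub_le_of_norm_derivWithin_le
        (hγ.differentiableOn one_ne_zero) hd hb ha
  · refine ((hγ.differentiableOn one_ne_zero t ht).hasDerivWithinAt).norm_le_of_norm_sub_le
      (uniqueDiffOn_Icc zero_lt_one t ht) fun u hu => ?_
    simpa [Real.norm_eq_abs] using hlip u hu t ht

theorem toLp_mem_cyl {n : ℕ} {X : Set (E n)} {g h : E n → ℝ} {x : E n} {r : ℝ} :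
    WithLp.toLp 2 (x, r) ∈ Cyl X g h ↔ x ∈ X ∧ g x < r ∧ r < h x := Iff.rfl

theorem add_mul_sub_mem_Ioo {a b θ : ℝ} (hab : a < b) (hθ : θ ∈ Ioo 0 1) :
    a + θ * (b - a) ∈ Ioo a b := by
  obtain ⟨hθ0, hθ1⟩ := hθ
  constructor <;> nlinarith

theorem div_sub_mem_Ioo {a b r : ℝ} (har : a < r) (hrb : r < b) :
    (r - a) / (b - a) ∈ Ioo 0 1 :=
  ⟨div_pos (by linarith) (by linarith), (div_lt_one (by linarith)).2 (by linarith)⟩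

theorem abs_comp_sub_le {V : Type*} [SeminormedAddCommGroup V] {X : Set V} {f : V → ℝ}
    {γ : ℝ → V} {s : Set ℝ} {L C : ℝ} (hL : 0 ≤ L)
    (hf : ∀ x ∈ X, ∀ y ∈ X, |f x - f y| ≤ L * ‖x - y‖) (hγX : ∀ t ∈ s, γ t ∈ X)
    (hγ : ∀ a ∈ s, ∀ b ∈ s, ‖γ a - γ b‖ ≤ C * |a - b|) :
    ∀ a ∈ s, ∀ b ∈ s, |f (γ a) - f (γ b)| ≤ L * C * |a - b| := fun a ha b hb => calc
  _ ≤ L * ‖γ a - γ b‖ := hf _ (hγX a ha) _ (hγX b hb)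
  _ ≤ L * (C * |a - b|) := by gcongr; exact hγ a ha b hb
  _ = L * C * |a - b| := by ring

theorem abs_interpolate_sub_le {u v : ℝ → ℝ} {M lam mu : ℝ} (hM : 0 ≤ M)
    (hu : ∀ a ∈ Icc (0:ℝ) 1, ∀ b ∈ Icc (0:ℝ) 1, |u a - u b| ≤ M * |a - b|)
    (hv : ∀ a ∈ Icc (0:ℝ) 1, ∀ b ∈ Icc (0:ℝ) 1, |v a - v b| ≤ M * |a - b|)
    (huv : ∀ t ∈ Icc (0:ℝ) 1, u t ≤ v t) (hlam : lam ∈ Icc (0:ℝ) 1) (hmu : mu ∈ Icc (0:ℝ) 1)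
    {a b : ℝ} (ha : a ∈ Icc (0:ℝ) 1) (hb : b ∈ Icc (0:ℝ) 1) :
    |(u a + (lam + a * (mu - lam)) * (v a - u a)) - (u b + (lam + b * (mu - lam)) * (v b - u b))|
      ≤ (M + |mu - lam| * (v 0 - u 0 + 2 * M)) * |a - b| := by
  obtain ⟨hθ0, hθ1⟩ : lam + a * (mu - lam) ∈ Icc (0:ℝ) 1 :=
    (convex_Icc 0 1).add_smul_sub_mem hlam hmu ha
  set θ := lam + a * (mu - lam)
  have hwidth : v b - u b ≤ v 0 - u 0 + 2 * M := by
    have h0 : (0:ℝ) ∈ Icc (0:ℝ) 1 := left_mem_Icc.2 zero_le_one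
    have hb1 : M * |b - 0| ≤ M := by
      rw [sub_zero, abs_of_nonneg hb.1]
      exact mul_le_of_le_one_right hM hb.2
    linarith [abs_le.1 (hu b hb 0 h0), abs_le.1 (hv b hb 0 h0)]
  have key : (u a + θ * (v a - u a)) - (u b + (lam + b * (mu - lam)) * (v b - u b))
      = (1 - θ) * (u a - u b) + θ * (v a - v b) + (mu - lam) * (a - b) * (v b - u b) := by
    ring
  rw [key]
  calc _ ≤ |(1 - θ) * (u a - u b)| + |θ * (v a - v b)| + |(mu - lam) * (a - b) * (v b - u b)| :=
        abs_add_three _ _ _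
    _ = (1 - θ) * |u a - u b| + θ * |v a - v b| + |mu - lam| * |a - b| * (v b - u b) := by
        rw [abs_mul, abs_mul, abs_mul, abs_mul, abs_of_nonneg (sub_nonneg.2 hθ1),
          abs_of_nonneg hθ0, abs_of_nonneg (sub_nonneg.2 (huv b hb))]
    _ ≤ (1 - θ) * (M * |a - b|) + θ * (M * |a - b|)
          + |mu - lam| * |a - b| * (v 0 - u 0 + 2 * M) := by
        have := hu a ha b hb
        have := hv a ha b hb
        gcongr
    _ = (M + |mu - lam| * (v 0 - u 0 + 2 * M)) * |a - b| := by ring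

theorem abs_div_sub_div_mul_le {g₀ h₀ g₁ h₁ r s δ : ℝ} (h₀g₀ : g₀ < h₀) (h₁g₁ : g₁ < h₁)
    (hs : s ∈ Icc g₁ h₁) (hg : |g₁ - g₀| ≤ δ) (hh : |h₁ - h₀| ≤ δ) :
    |(s - g₁) / (h₁ - g₁) - (r - g₀) / (h₀ - g₀)| * (h₀ - g₀) ≤ |r - s| + δ := by
  set μ := (s - g₁) / (h₁ - g₁)
  have hμ0 : 0 ≤ μ := div_nonneg (by linarith [hs.1]) (by linarith)
  have hμ1 : μ ≤ 1 := (div_le_one (by linarith)).2 (by linarith [hs.2])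
  have hμ : μ * (h₁ - g₁) = s - g₁ := div_mul_cancel₀ _ (by linarith)
  have key : (μ - (r - g₀) / (h₀ - g₀)) * (h₀ - g₀)
      = (s - r) - μ * (h₁ - h₀) - (1 - μ) * (g₁ - g₀) := by
    rw [sub_mul, div_mul_cancel₀ _ (by linarith)]
    linear_combination hμ
  calc _ = |s - r - μ * (h₁ - h₀) - (1 - μ) * (g₁ - g₀)| := by
        rw [← key, abs_mul, abs_of_pos (sub_pos.2 h₀g₀)]
    _ ≤ |s - r| + |μ * (h₁ - h₀)| + |(1 - μ) * (g₁ - g₀)| :=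
        (abs_sub _ _).trans (add_le_add_left (abs_sub _ _) _)
    _ = |r - s| + μ * |h₁ - h₀| + (1 - μ) * |g₁ - g₀| := by
        rw [abs_sub_comm, abs_mul, abs_mul, abs_of_nonneg hμ0, abs_of_nonneg (sub_nonneg.2 hμ1)]
    _ ≤ |r - s| + μ * δ + (1 - μ) * δ := by gcongr
    _ = |r - s| + δ := by ring

section Lift

variable {V : Type*}

def cylLift (g h : V → ℝ) (γ : ℝ → V) (lam mu t : ℝ) : WithLp 2 (V × ℝ) :=
  WithLp.toLp 2 (γ t, g (γ t) + (lam + t * (mu - lam)) * (h (γ t) - g (γ t)))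

variable {g h : V → ℝ} {γ : ℝ → V} {lam mu : ℝ}

theorem cylLift_zero :
    cylLift g h γ lam mu 0 = WithLp.toLp 2 (γ 0, g (γ 0) + lam * (h (γ 0) - g (γ 0))) := by
  simp [cylLift]

theorem cylLift_one :
    cylLift g h γ lam mu 1 = WithLp.toLp 2 (γ 1, g (γ 1) + mu * (h (γ 1) - g (γ 1))) := by
  simp [cylLift]

theorem norm_cylLift_sub_le [SeminormedAddCommGroup V] {C M : ℝ} (hM : 0 ≤ M)
    (hγ : ∀ a ∈ Icc (0:ℝ) 1, ∀ b ∈ Icc (0:ℝ) 1, ‖γ a - γ b‖ ≤ C * |a - b|)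
    (hgγ : ∀ a ∈ Icc (0:ℝ) 1, ∀ b ∈ Icc (0:ℝ) 1, |g (γ a) - g (γ b)| ≤ M * |a - b|)
    (hhγ : ∀ a ∈ Icc (0:ℝ) 1, ∀ b ∈ Icc (0:ℝ) 1, |h (γ a) - h (γ b)| ≤ M * |a - b|)
    (hgh : ∀ t ∈ Icc (0:ℝ) 1, g (γ t) ≤ h (γ t)) (hlam : lam ∈ Icc (0:ℝ) 1)
    (hmu : mu ∈ Icc (0:ℝ) 1) {a b : ℝ} (ha : a ∈ Icc (0:ℝ) 1) (hb : b ∈ Icc (0:ℝ) 1) :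
    ‖cylLift g h γ lam mu a - cylLift g h γ lam mu b‖
      ≤ (C + M + |mu - lam| * (h (γ 0) - g (γ 0) + 2 * M)) * |a - b| := calc
  _ ≤ ‖γ a - γ b‖ + |(g (γ a) + (lam + a * (mu - lam)) * (h (γ a) - g (γ a)))
        - (g (γ b) + (lam + b * (mu - lam)) * (h (γ b) - g (γ b)))| := by
      simpa [cylLift] using
        WithLp.prod_norm_le_add 2 (cylLift g h γ lam mu a - cylLift g h γ lam mu b)
  _ ≤ C * |a - b| + (M + |mu - lam| * (h (γ 0) - g (γ 0) + 2 * M)) * |a - b| :=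
      add_le_add (hγ a ha b hb) (abs_interpolate_sub_le hM hgγ hhγ hgh hlam hmu ha hb)
  _ = _ := by ring

theorem contDiffOn_cylLift [NormedAddCommGroup V] [NormedSpace ℝ V] {X : Set V} {s : Set ℝ}
    {m : WithTop ℕ∞} (hg : ContDiffOn ℝ m g X) (hh : ContDiffOn ℝ m h X)
    (hγ : ContDiffOn ℝ m γ s) (hγX : MapsTo γ s X) :
    ContDiffOn ℝ m (cylLift g h γ lam mu) s := by
  have hgγ := hg.comp hγ hγX
  have hℓ : ContDiff ℝ m fun t : ℝ => lam + t * (mu - lam) := by fun_prop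
  exact WithLp.contDiff_toLp.comp_contDiffOn
    (hγ.prodMk (hgγ.add (hℓ.contDiffOn.mul ((hh.comp hγ hγX).sub hgγ))))

end Lift

theorem cylLift_mem_cyl {n : ℕ} {X : Set (E n)} {g h : E n → ℝ} {γ : ℝ → E n} {lam mu t : ℝ}
    (hγX : γ t ∈ X) (hgh : g (γ t) < h (γ t)) (hlam : lam ∈ Ioo (0:ℝ) 1)
    (hmu : mu ∈ Ioo (0:ℝ) 1) (ht : t ∈ Icc (0:ℝ) 1) : cylLift g h γ lam mu t ∈ Cyl X g h :=
  toLp_mem_cyl.2 ⟨hγX, add_mul_sub_mem_Ioo hgh ((convex_Ioo 0 1).add_smul_sub_mem hlam hmu ht)⟩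

theorem hasCurve_cyl {n : ℕ} {X : Set (E n)} {g h : E n → ℝ} {k L : ℝ} (hk : 0 ≤ k)
    (hL : 0 ≤ L) (hX : ∀ x ∈ X, ∀ y ∈ X, HasCurve X k x y) (hg : ContDiffOn ℝ 1 g X)
    (hh : ContDiffOn ℝ 1 h X) (hgL : ∀ x ∈ X, ∀ y ∈ X, |g x - g y| ≤ L * ‖x - y‖)
    (hhL : ∀ x ∈ X, ∀ y ∈ X, |h x - h y| ≤ L * ‖x - y‖) (hgh : ∀ x ∈ X, g x < h x)
    {p q : WithLp 2 (E n × ℝ)} (hp : p ∈ Cyl X g h) (hq : q ∈ Cyl X g h) :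
    HasCurve (Cyl X g h) (k + 3 * L * k + L + 1) p q := by
  obtain ⟨⟨x, r⟩⟩ := p
  obtain ⟨⟨y, s⟩⟩ := q
  obtain ⟨hx, hgr, hrh⟩ := toLp_mem_cyl.1 hp
  obtain ⟨hy, hgs, hsh⟩ := toLp_mem_cyl.1 hq
  obtain ⟨γ, hγ0, hγ1, hγX, hγC, hγlip⟩ := hasCurve_iff.1 (hX x hx y hy)
  set lam := (r - g x) / (h x - g x)
  set mu := (s - g y) / (h y - g y)
  have hlam : lam ∈ Ioo 0 1 := div_sub_mem_Ioo hgr hrh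
  have hmu : mu ∈ Ioo 0 1 := div_sub_mem_Ioo hgs hsh
  refine hasCurve_iff.2 ⟨cylLift g h γ lam mu, ?_, ?_,
    fun t ht => cylLift_mem_cyl (hγX t ht) (hgh _ (hγX t ht)) hlam hmu ht,
    contDiffOn_cylLift hg hh hγC hγX, fun a ha b hb => ?_⟩
  · rw [cylLift_zero, hγ0, div_mul_cancel₀ _ (sub_pos.2 (hgh x hx)).ne', add_sub_cancel]
  · rw [cylLift_one, hγ1, div_mul_cancel₀ _ (sub_pos.2 (hgh y hy)).ne', add_sub_cancel]
  set P := ‖WithLp.toLp 2 (x, r) - WithLp.toLp 2 (y, s)‖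
  set d := ‖x - y‖
  have hdP : d ≤ P := by
    simpa using WithLp.norm_fst_le (x := WithLp.toLp 2 (x, r) - WithLp.toLp 2 (y, s))
  have hrsP : |r - s| ≤ P := by
    simpa using WithLp.norm_snd_le (x := WithLp.toLp 2 (x, r) - WithLp.toLp 2 (y, s))
  have hlift := norm_cylLift_sub_le (by positivity) hγlip (abs_comp_sub_le hL hgL hγX hγlip)
    (abs_comp_sub_le hL hhL hγX hγlip) (fun t ht => (hgh _ (hγX t ht)).le)
    (Ioo_subset_Icc_self hlam) (Ioo_subset_Icc_self hmu) ha hb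
  rw [hγ0] at hlift
  have hend : |mu - lam| * (h x - g x) ≤ |r - s| + L * d :=
    abs_div_sub_div_mul_le (hgh x hx) (hgh y hy) ⟨hgs.le, hsh.le⟩
      ((hgL y hy x hx).trans_eq (by rw [norm_sub_rev]))
      ((hhL y hy x hx).trans_eq (by rw [norm_sub_rev]))
  have hml : |mu - lam| ≤ 1 :=
    abs_le.2 ⟨by linarith [hlam.2, hmu.1], by linarith [hlam.1, hmu.2]⟩
  refine hlift.trans (mul_le_mul_of_nonneg_right ?_ (abs_nonneg _))
  nlinarith [mul_le_of_le_one_left (by positivity : 0 ≤ 2 * (L * (k * d))) hml,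
    mul_le_mul_of_nonneg_left hdP (by positivity : 0 ≤ k + 3 * L * k + L)]

theorem stmt6 (n : ℕ) (k L : ℝ) (hk : 0 < k) (hL : 0 < L) :
    ∃ K : ℝ, 0 < K ∧
      ∀ (X : Set (E n)) (g h : E n → ℝ),
        (∀ x ∈ X, ∀ y ∈ X, HasCurve X k x y) →
        ContDiffOn ℝ 1 g X → ContDiffOn ℝ 1 h X →
        (∀ x ∈ X, ∀ y ∈ X, |g x - g y| ≤ L * ‖x - y‖) →
        (∀ x ∈ X, ∀ y ∈ X, |h x - h y| ≤ L * ‖x - y‖) →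
        (∀ x ∈ X, g x < h x) →
        ∀ p ∈ Cyl X g h, ∀ q ∈ Cyl X g h, HasCurve (Cyl X g h) K p q :=
  ⟨k + 3 * L * k + L + 1, by positivity, fun _ _ _ hX hg hh hgL hhL hgh _ hp _ hq =>
    hasCurve_cyl hk.le hL.le hX hg hh hgL hhL hgh hp hq⟩
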